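/- arXiv:2006.04805 — 9 statements merged into one kernel-verified Lean document; each statement's English description precedes it below -/
import Mathlib

section
/- For all positive integers n ≥ 2 and 1 ≤ m ≤ n, we have (n/(n-1))^n · ∑_{r=m}^{n} (r/n) · (n_[r]/n^r) · D_{r-m}/(r-m)! = n_[m]/(n-1)^m, where n_[r] = n(n-1)⋯(n-r+1) is the falling factorial and D_k = k! · ∑_{j=0}^{k} (-1)^j/j! is the number of derangements of k objects. -/
/-!
Expand `D_k / k! = ∑_{j ≤ k} (-1)^j / j!` and exchange the two sums. The inner sum over `r`
then telescopes, since `r · n_[r] · n^(n-r) = n_[r] · n^(n+1-r) - n_[r+1] · n^(n-r)`, and what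
is left is `n · n_[m]` times the binomial expansion of `(n - 1)^(n-m)`.
-/

open Finset

/-- Derangement number `D k = k! * ∑_{j=0}^k (-1)^j/j!`, as a real number. -/
noncomputable def derNum (k : ℕ) : ℝ :=
  (k.factorial : ℝ) * ∑ j ∈ Finset.range (k + 1), (-1 : ℝ) ^ j / (j.factorial : ℝ)

section CommRing

variable {R : Type*} [CommRing R]

theorem sum_Icc_mul_descFactorial_mul_pow {s n : ℕ} (hs : s ≤ n) :
    ∑ r ∈ Icc s n, (r : R) * n.descFactorial r * (n : R) ^ (n - r)
      = n.descFactorial s * (n : R) ^ (n + 1 - s) := by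
  set g : ℕ → R := fun r ↦ n.descFactorial r * (n : R) ^ (n + 1 - r)
  have hterm : ∀ r ∈ Icc s n, (r : R) * n.descFactorial r * (n : R) ^ (n - r)
      = -(g (r + 1) - g r) := by
    intro r hr
    have hrn : r ≤ n := (mem_Icc.1 hr).2
    simp only [g, Nat.descFactorial_succ, Nat.succ_sub_succ, Nat.sub_add_comm hrn, pow_succ]
    push_cast [Nat.cast_sub hrn]
    ring
  have hvanish : g (n + 1) = 0 := by simp [g]
  rw [sum_congr rfl hterm, sum_neg_distrib, sum_Icc_sub hs, hvanish, zero_sub, neg_neg]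

end CommRing

theorem sum_range_descFactorial_mul_pow_mul_neg_one_pow_div_factorial
    {K : Type*} [Field K] [CharZero K] {m n : ℕ} (hmn : m ≤ n) :
    ∑ j ∈ range (n - m + 1), n.descFactorial (m + j) * (n : K) ^ (n + 1 - (m + j)) *
        ((-1) ^ j / j.factorial)
      = n * n.descFactorial m * ((n : K) - 1) ^ (n - m) := by
  rw [sub_eq_neg_add, add_pow, mul_sum]
  refine sum_congr rfl fun j hj ↦ ?_
  have hjN : j ≤ n - m := Nat.lt_succ_iff.1 (mem_range.1 hj)
  rw [← Nat.descFactorial_mul_descFactorial (Nat.le_add_right m j), Nat.add_sub_cancel_left,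
    Nat.descFactorial_eq_factorial_mul_choose, show n + 1 - (m + j) = n - m - j + 1 by omega,
    pow_succ]
  have hfac : (j.factorial : K) ≠ 0 := Nat.cast_ne_zero.2 j.factorial_ne_zero
  push_cast
  field_simp

theorem derNum_div_factorial (k : ℕ) :
    derNum k / k.factorial = ∑ j ∈ range (k + 1), (-1 : ℝ) ^ j / j.factorial := by
  rw [derNum, mul_div_cancel_left₀]
  positivity

theorem sum_Icc_mul_descFactorial_mul_pow_mul_derNum_div_factorial {m n : ℕ} (hmn : m ≤ n) :
    ∑ r ∈ Icc m n, (r : ℝ) * n.descFactorial r * (n : ℝ) ^ (n - r) *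
        (derNum (r - m) / (r - m).factorial)
      = n * n.descFactorial m * ((n : ℝ) - 1) ^ (n - m) := by
  simp_rw [derNum_div_factorial, mul_sum]
  rw [sum_comm' (t' := range (n - m + 1)) (s' := fun j ↦ Icc (m + j) n) (by
    intro r j; simp only [mem_Icc, mem_range]; omega)]
  simp_rw [← sum_mul]
  rw [← sum_range_descFactorial_mul_pow_mul_neg_one_pow_div_factorial hmn]
  refine sum_congr rfl fun j hj ↦ ?_
  rw [sum_Icc_mul_descFactorial_mul_pow (by have := mem_range.1 hj; omega)]

theorem stmt_0_general (n m : ℕ) (hn : 2 ≤ n) (hmn : m ≤ n) :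
    ((n : ℝ) / ((n : ℝ) - 1)) ^ n *
      ∑ r ∈ Finset.Icc m n,
        ((r : ℝ) / n) * ((n.descFactorial r : ℝ) / (n : ℝ) ^ r) *
          (derNum (r - m) / ((r - m).factorial : ℝ))
    = (n.descFactorial m : ℝ) / ((n : ℝ) - 1) ^ m := by
  have hn0 : (n : ℝ) ≠ 0 := by positivity
  have hn1 : (n : ℝ) - 1 ≠ 0 := by
    have : (2 : ℝ) ≤ n := by exact_mod_cast hn
    linarith
  have hsum : ∑ r ∈ Icc m n, ((r : ℝ) / n) * ((n.descFactorial r : ℝ) / (n : ℝ) ^ r) *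
        (derNum (r - m) / (r - m).factorial)
      = (∑ r ∈ Icc m n, (r : ℝ) * n.descFactorial r * (n : ℝ) ^ (n - r) *
          (derNum (r - m) / (r - m).factorial)) / (n : ℝ) ^ (n + 1) := by
    rw [sum_div]
    refine sum_congr rfl fun r hr ↦ ?_
    rw [show n + 1 = (n - r) + r + 1 by have := (mem_Icc.1 hr).2; omega, pow_succ, pow_add]
    field_simp
  have hsplit : ((n : ℝ) - 1) ^ n = ((n : ℝ) - 1) ^ (n - m) * ((n : ℝ) - 1) ^ m := by
    rw [← pow_add, Nat.sub_add_cancel hmn]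
  rw [hsum, sum_Icc_mul_descFactorial_mul_pow_mul_derNum_div_factorial hmn, div_pow, hsplit,
    pow_succ]
  field_simp

theorem stmt_0 (n m : ℕ) (hn : 2 ≤ n) (hm1 : 1 ≤ m) (hmn : m ≤ n) :
    ((n : ℝ) / ((n : ℝ) - 1)) ^ n *
      ∑ r ∈ Finset.Icc m n,
        ((r : ℝ) / n) * ((n.descFactorial r : ℝ) / (n : ℝ) ^ r) *
          (derNum (r - m) / ((r - m).factorial : ℝ))
    = (n.descFactorial m : ℝ) / ((n : ℝ) - 1) ^ m :=
  stmt_0_general n m hn hmn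
end

section
/- For all positive integers n and all 1 ≤ m ≤ n: ∑_{r=m}^{n} (r/n) · (n_[r]/n^r) · D_{r-m}/(r-m)! = (n_[m]/n^m) · (1 - 1/n)^{n-m}, where n_[r] is the falling factorial and D_k the derangement number. -/
open Finset

theorem Finset.sum_range_sub_mul_sum_range {R : Type*} [CommRing R] (b c : ℕ → R) (N : ℕ) :
    ∑ k ∈ range (N + 1), (b k - b (k + 1)) * ∑ j ∈ range (k + 1), c j
      = ∑ j ∈ range (N + 1), c j * (b j - b (N + 1)) := by
  induction N with
  | zero => simp [mul_comm]
  | succ N ih =>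
    rw [sum_range_succ, ih, mul_sum,
      sum_range_succ (fun i => (b (N + 1) - b (N + 1 + 1)) * c i) (N + 1), sum_range_succ (fun j => c j * (b j - b (N + 1 + 1))) (N + 1), ← add_assoc,
      ← sum_add_distrib]
    congr 1
    · exact sum_congr rfl fun j _ => by ring
    · ring

variable {K : Type*} [Field K] [CharZero K]

theorem Nat.cast_descFactorial_div_pow_sub_succ {n : ℕ} (hn : n ≠ 0) (r : ℕ) :
    ((r : K) / n) * (n.descFactorial r / (n : K) ^ r)
      = n.descFactorial r / (n : K) ^ r - n.descFactorial (r + 1) / (n : K) ^ (r + 1) := by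
  rw [Nat.descFactorial_succ]
  by_cases hrn : r ≤ n
  · push_cast [Nat.cast_sub hrn]
    field_simp
    ring
  · simp [Nat.descFactorial_eq_zero_iff_lt.mpr (Nat.lt_of_not_le hrn)]

theorem Nat.cast_descFactorial_add_div_pow {n : ℕ} (hn : n ≠ 0) (m j : ℕ) :
    (n.descFactorial (m + j) : K) / (n : K) ^ (m + j)
      = n.descFactorial m / (n : K) ^ m * ((n - m).descFactorial j / (n : K) ^ j) := by
  rw [← Nat.descFactorial_mul_descFactorial (Nat.le_add_right m j), Nat.add_sub_cancel_left]
  push_cast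
  field_simp
  ring

theorem sum_range_pow_mul_descFactorial_div_factorial (x : K) (N : ℕ) :
    ∑ j ∈ range (N + 1), x ^ j * N.descFactorial j / j.factorial = (1 + x) ^ N := by
  rw [add_comm (1 : K) x, add_pow]
  refine sum_congr rfl fun j _ => ?_
  rw [Nat.descFactorial_eq_factorial_mul_choose]
  have : (j.factorial : K) ≠ 0 := Nat.cast_ne_zero.mpr j.factorial_ne_zero
  push_cast
  field_simp
  ring

theorem stmt_1_general (n m : ℕ) (hn : 1 ≤ n) (hmn : m ≤ n) :
    ∑ r ∈ Finset.Icc m n,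
        ((r : ℝ) / n) * ((n.descFactorial r : ℝ) / (n : ℝ) ^ r) *
          (derNum (r - m) / ((r - m).factorial : ℝ))
    = ((n.descFactorial m : ℝ) / (n : ℝ) ^ m) * (1 - 1 / (n : ℝ)) ^ (n - m) := by
  have hn0 : n ≠ 0 := Nat.one_le_iff_ne_zero.mp hn
  set a : ℕ → ℝ := fun r => n.descFactorial r / (n : ℝ) ^ r
  have ha_top : a (m + (n - m + 1)) = 0 := by
    simp [a, Nat.descFactorial_eq_zero_iff_lt.mpr (show n < m + (n - m + 1) by omega)]
  rw [← Ico_add_one_right_eq_Icc, sum_Ico_eq_sum_range, show n + 1 - m = n - m + 1 by omega]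
  calc _ = ∑ k ∈ range (n - m + 1), (a (m + k) - a (m + (k + 1))) *
          ∑ j ∈ range (k + 1), (-1 : ℝ) ^ j / j.factorial := by
        refine sum_congr rfl fun k _ => ?_
        rw [Nat.add_sub_cancel_left, derNum_div_factorial,
          Nat.cast_descFactorial_div_pow_sub_succ hn0, Nat.add_assoc]
    _ = ∑ j ∈ range (n - m + 1),
          (-1 / (n : ℝ)) ^ j * (n - m).descFactorial j / j.factorial * a m := by
        rw [sum_range_sub_mul_sum_range (fun k => a (m + k)), ha_top]
        refine sum_congr rfl fun j _ => ?_
        simp only [a, sub_zero, Nat.cast_descFactorial_add_div_pow hn0, div_pow]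
        field_simp
    _ = a m * (1 - 1 / (n : ℝ)) ^ (n - m) := by
        rw [← sum_mul, sum_range_pow_mul_descFactorial_div_factorial, mul_comm]
        ring

theorem stmt_1 (n m : ℕ) (hn : 1 ≤ n) (hm1 : 1 ≤ m) (hmn : m ≤ n) :
    ∑ r ∈ Finset.Icc m n,
        ((r : ℝ) / n) * ((n.descFactorial r : ℝ) / (n : ℝ) ^ r) *
          (derNum (r - m) / ((r - m).factorial : ℝ))
    = ((n.descFactorial m : ℝ) / (n : ℝ) ^ m) * (1 - 1 / (n : ℝ)) ^ (n - m) :=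
  stmt_1_general n m hn hmn
end

section
/- For a positive integer n and 1 ≤ j ≤ n, the tail sum ∑_{k=j}^{n} (k/n) · (n-1)_[k-1]/n^{k-1} equals (n-1)_[j-1]/n^{j-1}, where (n-1)_[k] denotes the falling factorial (n-1)(n-2)⋯(n-k). -/
/-!
With `π k = (n-1)_[k] / n^k`, the factor `n - 1 - k` in `(n-1)_[k+1]` gives
`π k - π (k+1) = ((k+1)/n) π k`, so the tail sum telescopes; it stops at `k = n`
because `π k = 0` for `k ≥ n`.
-/

open Finset

section CoreTail

variable {K : Type*} [Field K] [CharZero K] {n : ℕ}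

/-- `π_k = ∏_{l ≤ k} (1 - l/n)`, the probability that the core of a random mapping on `n`
points has more than `k` elements. -/
def coreTail (n k : ℕ) : K := ((n - 1).descFactorial k : K) / (n : K) ^ k

lemma coreTail_eq_zero_of_le (hn : 0 < n) {k : ℕ} (hk : n ≤ k) : coreTail n k = (0 : K) := by
  simp [coreTail, Nat.descFactorial_eq_zero_iff_lt.mpr (by omega : n - 1 < k)]

lemma coreTail_succ_of_lt (hn : 0 < n) {m : ℕ} (hm : m < n) :
    coreTail n (m + 1) = coreTail n m * (((n : K) - (m + 1)) / n) := by
  have hsub : ((n - 1 - m : ℕ) : K) = n - (m + 1) := by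
    rw [show n - 1 - m = n - (m + 1) by omega, Nat.cast_sub hm, Nat.cast_succ]
  have hn' : (n : K) ≠ 0 := by exact_mod_cast hn.ne'
  simp only [coreTail, Nat.descFactorial_succ, Nat.cast_mul, hsub]
  field_simp
  ring

lemma mul_coreTail_pred_add_coreTail (hn : 0 < n) (k : ℕ) :
    (k / n : K) * coreTail n (k - 1) + coreTail n k = coreTail n (k - 1) := by
  have hn' : (n : K) ≠ 0 := by exact_mod_cast hn.ne'
  obtain _ | m := k
  · simp
  rw [Nat.add_sub_cancel]
  rcases lt_or_ge m n with hm | hm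
  · rw [coreTail_succ_of_lt hn hm]
    field_simp
    push_cast
    ring
  · simp [coreTail_eq_zero_of_le hn hm, coreTail_eq_zero_of_le hn (hm.trans m.le_succ)]

theorem sum_Icc_mul_coreTail_pred (hn : 0 < n) (j : ℕ) :
    ∑ k ∈ Icc j n, (k / n : K) * coreTail n (k - 1) = coreTail n (j - 1) := by
  induction h : n + 1 - j generalizing j with
  | zero =>
    rw [Icc_eq_empty (by omega), sum_empty, coreTail_eq_zero_of_le hn (by omega)]
  | succ d ih =>
    rw [← insert_Icc_add_one_left_eq_Icc (by omega), sum_insert (by simp),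
      ih (j + 1) (by omega), Nat.add_sub_cancel, mul_coreTail_pred_add_coreTail hn]

end CoreTail

theorem stmt_2_general (n j : ℕ) (hn : 0 < n) :
    ∑ k ∈ Finset.Icc j n,
        ((k : ℝ) / n) * (((n - 1).descFactorial (k - 1) : ℝ) / (n : ℝ) ^ (k - 1))
    = ((n - 1).descFactorial (j - 1) : ℝ) / (n : ℝ) ^ (j - 1) :=
  sum_Icc_mul_coreTail_pred hn j

theorem stmt_2 (n j : ℕ) (hn : 0 < n) (hj1 : 1 ≤ j) (hjn : j ≤ n) :
    ∑ k ∈ Finset.Icc j n,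
        ((k : ℝ) / n) * (((n - 1).descFactorial (k - 1) : ℝ) / (n : ℝ) ^ (k - 1))
    = ((n - 1).descFactorial (j - 1) : ℝ) / (n : ℝ) ^ (j - 1) :=
  stmt_2_general n j hn
end

section
/- For any positive integer n, the function r ↦ (r/n) · n_[r]/n^r for r = 1, …, n defines a probability distribution: ∑_{r=1}^{n} (r/n) · n_[r]/n^r = 1, where n_[r] is the falling factorial. -/
open Finset

/-! `n_[r] / n ^ r` decreases in `r` by exactly `(r / n) n_[r] / n ^ r`, because
`n_[r+1] = (n - r) n_[r]`. The sum therefore telescopes to `n_[1] / n - n_[n+1] / n ^ (n+1) = 1 - 0`. -/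

lemma descFactorial_div_pow_sub_succ {K : Type*} [Field K] [CharZero K] {n r : ℕ}
    (hn : n ≠ 0) (hr : r ≤ n) :
    (n.descFactorial r : K) / n ^ r - n.descFactorial (r + 1) / n ^ (r + 1) =
      r / n * (n.descFactorial r / n ^ r) := by
  rw [Nat.descFactorial_succ, Nat.cast_mul, Nat.cast_sub hr, pow_succ]
  field_simp
  ring

theorem stmt_3 (n : ℕ) (hn : 0 < n) :
    ∑ r ∈ Finset.Icc 1 n, ((r : ℝ) / n) * ((n.descFactorial r : ℝ) / (n : ℝ) ^ r) = 1 := by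
  set f : ℕ → ℝ := fun r => n.descFactorial r / (n : ℝ) ^ r
  have hstep : ∀ r ∈ Icc 1 n, (r : ℝ) / n * f r = -(f (r + 1) - f r) := fun r hr => by
    rw [neg_sub, descFactorial_div_pow_sub_succ hn.ne' (mem_Icc.mp hr).2]
  have hf_one : f 1 = 1 := by
    simp [f, hn.ne']
  have hf_succ : f (n + 1) = 0 := by
    simp [f]
  rw [sum_congr rfl hstep, sum_neg_distrib, sum_Icc_sub hn, hf_one, hf_succ]
  norm_num
end

section
/- As n → ∞, the quantity q_n = ∑_{l=1}^{⌊n/2⌋} (-1)^{l-1} n_[2l] / (2^l · l! · (n-1)^{2l}) converges to 1 - e^{-1/2}. -/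
/-!
Tannery's theorem. After the shift `l = k + 1`, the `l`-th summand is
`c k * (n_[2l] / (n - 1)^(2l))` with `c k = (-1)^k / (2^(k+1) (k+1)!)`. The ratio tends to `1`
for fixed `l` and, since `n_[j+1] ≤ n (n - 1)^j`, is at most `n / (n - 1) ≤ 2`; so the sums
converge to `∑ c k = -∑_{k ≥ 1} (-1/2)^k / k! = 1 - exp (-1/2)`.
-/

open Finset Filter Topology

theorem tendsto_sub_div_sub_one_atTop (c : ℝ) :
    Tendsto (fun n : ℕ => ((n : ℝ) - c) / ((n : ℝ) - 1)) atTop (𝓝 1) := by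
  have h : Tendsto (fun n : ℕ => 1 + (1 - c) / ((n : ℝ) - 1)) atTop (𝓝 (1 + 0)) :=
    tendsto_const_nhds.add <| tendsto_const_nhds.div_atTop <|
      tendsto_atTop_add_const_right _ (-1) tendsto_natCast_atTop_atTop
  rw [add_zero] at h
  refine h.congr' ?_
  filter_upwards [eventually_gt_atTop 1] with n hn
  have : (n : ℝ) - 1 ≠ 0 := sub_ne_zero.mpr (by exact_mod_cast hn.ne')
  field_simp
  ring

theorem tendsto_descFactorial_div_sub_one_pow (j : ℕ) :
    Tendsto (fun n : ℕ => (n.descFactorial j : ℝ) / ((n : ℝ) - 1) ^ j) atTop (𝓝 1) := by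
  have h := tendsto_finsetProd (range j) fun i _ => tendsto_sub_div_sub_one_atTop (i : ℝ)
  rw [prod_const_one] at h
  refine h.congr fun n => ?_
  rw [prod_div_distrib, prod_const, card_range, ← descPochhammer_eval_eq_prod_range,
    descPochhammer_eval_eq_descFactorial]

theorem Nat.descFactorial_succ_le_mul_pow (n k : ℕ) :
    n.descFactorial (k + 1) ≤ n * (n - 1) ^ k := by
  cases n with
  | zero => simp
  | succ m =>
    rw [Nat.succ_descFactorial_succ, Nat.add_sub_cancel]
    exact Nat.mul_le_mul_left _ (m.descFactorial_le_pow k)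

theorem abs_descFactorial_div_sub_one_pow_le_two {n : ℕ} (hn : 2 ≤ n) (j : ℕ) :
    |(n.descFactorial j : ℝ) / ((n : ℝ) - 1) ^ j| ≤ 2 := by
  have hn' : (2 : ℝ) ≤ n := by exact_mod_cast hn
  have hpos : (0 : ℝ) < (n : ℝ) - 1 := by linarith
  rw [abs_of_nonneg (by positivity)]
  cases j with
  | zero => norm_num
  | succ k =>
    have hle : (n.descFactorial (k + 1) : ℝ) ≤ n * ((n : ℝ) - 1) ^ k := by
      rw [← Nat.cast_pred (by omega)]
      exact_mod_cast Nat.descFactorial_succ_le_mul_pow n k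
    rw [div_le_iff₀ (by positivity), pow_succ]
    nlinarith [pow_pos hpos k]

theorem hasSum_neg_one_pow_div_two_pow_mul_factorial :
    HasSum (fun k : ℕ => (-1 : ℝ) ^ k / (2 ^ (k + 1) * (k + 1).factorial))
      (1 - Real.exp (-1 / 2)) := by
  have h := ((hasSum_nat_add_iff' 1).mpr
    (NormedSpace.expSeries_div_hasSum_exp (-1 / 2 : ℝ))).neg
  have hterm (k : ℕ) : -((-1 / 2 : ℝ) ^ (k + 1) / (k + 1).factorial)
      = (-1) ^ k / (2 ^ (k + 1) * (k + 1).factorial) := by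
    rw [div_pow, pow_succ (-1 : ℝ)]
    field_simp
  simpa only [← Real.exp_eq_exp_ℝ, hterm, sum_range_one, pow_zero, Nat.factorial_zero,
    Nat.cast_one, div_one, neg_sub] using h

theorem stmt_8 :
    Tendsto (fun n : ℕ =>
        ∑ l ∈ Finset.Icc 1 (n / 2),
          (-1 : ℝ) ^ (l - 1) * (n.descFactorial (2 * l) : ℝ) /
            (2 ^ l * (l.factorial : ℝ) * ((n : ℝ) - 1) ^ (2 * l)))
      atTop (nhds (1 - Real.exp (-1 / 2))) := by
  set c : ℕ → ℝ := fun k => (-1 : ℝ) ^ k / (2 ^ (k + 1) * (k + 1).factorial)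
  set r : ℕ → ℕ → ℝ := fun n j => (n.descFactorial j : ℝ) / ((n : ℝ) - 1) ^ j
  have hc : HasSum c (1 - Real.exp (-1 / 2)) := hasSum_neg_one_pow_div_two_pow_mul_factorial
  have hterm (k : ℕ) : Tendsto (fun n => c k * r n (2 * (k + 1))) atTop (𝓝 (c k)) := by
    simpa using (tendsto_descFactorial_div_sub_one_pow _).const_mul (c k)
  have hbound : ∀ᶠ n in atTop, ∀ k, ‖c k * r n (2 * (k + 1))‖ ≤ 2 * |c k| := by
    filter_upwards [eventually_ge_atTop 2] with n hn k
    rw [norm_mul, mul_comm (2 : ℝ)]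
    exact mul_le_mul_of_nonneg_left (abs_descFactorial_div_sub_one_pow_le_two hn _)
      (abs_nonneg _)
  have hlim := tendsto_tsum_of_dominated_convergence (hc.summable.abs.mul_left 2) hterm hbound
  rw [hc.tsum_eq] at hlim
  refine hlim.congr fun n => ?_
  rw [← Ico_add_one_right_eq_Icc, sum_Ico_eq_sum_range, Nat.add_sub_cancel,
    tsum_eq_sum (s := range (n / 2))]
  · refine sum_congr rfl fun k _ => ?_
    rw [Nat.add_sub_cancel_left, add_comm 1 k]
    exact div_mul_div_comm _ _ _ _
  · intro k hk
    rw [mem_range, not_lt] at hk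
    simp [r, Nat.descFactorial_eq_zero_iff_lt.mpr (by omega : n < 2 * (k + 1))]
end

section
/- For every integer n ≥ 2, ∑_{k=0}^{⌊n/2⌋} (1/2)^k (1/k!) ∑_{l=0}^{⌊n/2⌋-k} (-1)^l (1/2)^l (1/l!) · n_[2l+2k]/(n-1)^{2l+2k} = 1; i.e., the probabilities P(C̃₂*(n) = k) given by formula (c2n*law) sum to 1 over k = 0,…,⌊n/2⌋. -/
/-!
Grouping the terms by `m = k + l`, the inner sums become the Taylor coefficients of
`e^{x/2} e^{-x/2} = 1`, i.e. `(1/2 - 1/2)^m / m!`, which vanish for `m > 0`; only the term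
`m = 0`, equal to `1`, survives.
-/

open Finset

theorem sum_range_sum_range_sub_eq_sum_antidiagonal {M : Type*} [AddCommMonoid M] (N : ℕ)
    (f : ℕ → ℕ → M) :
    ∑ k ∈ range (N + 1), ∑ l ∈ range (N - k + 1), f k l =
      ∑ m ∈ range (N + 1), ∑ p ∈ antidiagonal m, f p.1 p.2 := by
  simp_rw [Nat.sum_antidiagonal_eq_sum_range_succ f, sum_range_diag_flip]
  refine sum_congr rfl fun k hk => ?_
  rw [mem_range] at hk
  rw [show N + 1 - k = N - k + 1 by omega]

theorem sum_antidiagonal_pow_div_factorial_mul {K : Type*} [Field K] [CharZero K] (a b : K)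
    (m : ℕ) :
    ∑ p ∈ antidiagonal m, a ^ p.1 / p.1.factorial * (b ^ p.2 / p.2.factorial) =
      (a + b) ^ m / m.factorial := by
  have h := congrArg (PowerSeries.coeff m) (PowerSeries.exp_mul_exp_eq_exp_add (A := K) a b)
  simpa [PowerSeries.coeff_mul, div_eq_mul_inv] using h

theorem sum_triangle_pow_div_factorial_mul {K : Type*} [Field K] [CharZero K] (a b : K) (c : ℕ → K) (N : ℕ) :
    ∑ k ∈ range (N + 1), ∑ l ∈ range (N - k + 1),
        a ^ k / k.factorial * (b ^ l / l.factorial) * c (k + l) =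
      ∑ m ∈ range (N + 1), (a + b) ^ m / m.factorial * c m := by
  rw [sum_range_sum_range_sub_eq_sum_antidiagonal]
  refine sum_congr rfl fun m _ => ?_
  rw [← sum_antidiagonal_pow_div_factorial_mul, sum_mul]
  exact sum_congr rfl fun p hp => by rw [mem_antidiagonal.mp hp]

theorem stmt_9_general (n : ℕ) :
    ∑ k ∈ Finset.range (n / 2 + 1),
        (1 / 2 : ℝ) ^ k * (1 / (k.factorial : ℝ)) *
          ∑ l ∈ Finset.range (n / 2 - k + 1),
            (-1 : ℝ) ^ l * (1 / 2 : ℝ) ^ l * (1 / (l.factorial : ℝ)) *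
              ((n.descFactorial (2 * l + 2 * k) : ℝ) / ((n : ℝ) - 1) ^ (2 * l + 2 * k))
    = 1 := by
  let c (m : ℕ) : ℝ := n.descFactorial (2 * m) / ((n : ℝ) - 1) ^ (2 * m)
  calc _ = ∑ k ∈ range (n / 2 + 1), ∑ l ∈ range (n / 2 - k + 1),
          (1 / 2 : ℝ) ^ k / k.factorial * ((-(1 / 2)) ^ l / l.factorial) * c (k + l) := by
        refine sum_congr rfl fun k _ => ?_
        rw [mul_sum]
        refine sum_congr rfl fun l _ => ?_
        rw [show 2 * l + 2 * k = 2 * (k + l) by ring, neg_pow (1 / 2 : ℝ)]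
        simp only [c]
        ring
    _ = ∑ m ∈ range (n / 2 + 1), (1 / 2 + -(1 / 2) : ℝ) ^ m / m.factorial * c m :=
        sum_triangle_pow_div_factorial_mul _ _ c _
    _ = 1 := by simp [sum_range_succ', c]

theorem stmt_9 (n : ℕ) (hn : 2 ≤ n) :
    ∑ k ∈ Finset.range (n / 2 + 1),
        (1 / 2 : ℝ) ^ k * (1 / (k.factorial : ℝ)) *
          ∑ l ∈ Finset.range (n / 2 - k + 1),
            (-1 : ℝ) ^ l * (1 / 2 : ℝ) ^ l * (1 / (l.factorial : ℝ)) *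
              ((n.descFactorial (2 * l + 2 * k) : ℝ) / ((n : ℝ) - 1) ^ (2 * l + 2 * k))
    = 1 :=
  stmt_9_general n
end

section
/- The probability that a uniform random mapping on [n] has a derangement as its core equals ((n-1)/n)^n, i.e., ∑_{r=1}^{n} (r/n)·(n_[r]/n^r)·(D_r/r!) = ((n-1)/n)^n. -/
open Finset

theorem stmt_15 (n : ℕ) (hn : 1 ≤ n) :
    ∑ r ∈ Finset.Icc 1 n,
        ((r : ℝ) / n) * ((n.descFactorial r : ℝ) / (n : ℝ) ^ r) * (derNum r / (r.factorial : ℝ))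
    = (((n : ℝ) - 1) / n) ^ n := by
  have hn0 : (n : ℝ) ≠ 0 := Nat.cast_ne_zero.mpr (by omega)
  set a : ℕ → ℝ := fun r => (n.descFactorial r : ℝ) / (n : ℝ) ^ r with ha
  -- telescoping sum
  have tele : ∀ m N : ℕ, m ≤ N → ∑ r ∈ Finset.Ico m N, (a r - a (r + 1)) = a m - a N := by
    intro m N h
    rw [Finset.sum_Ico_eq_sub _ h, Finset.sum_range_sub' a, Finset.sum_range_sub' a]
    ring
  -- rewrite each term
  have hterm : ∀ r ∈ Finset.Icc 1 n,
      ((r : ℝ) / n) * ((n.descFactorial r : ℝ) / (n : ℝ) ^ r) * (derNum r / (r.factorial : ℝ))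
      = ∑ j ∈ Finset.range (n + 1),
          (if j ≤ r then ((-1 : ℝ) ^ j / (j.factorial : ℝ)) * (a r - a (r + 1)) else 0) := by
    intro r hr
    rw [Finset.mem_Icc] at hr
    have hfac : (r.factorial : ℝ) ≠ 0 := by positivity
    have hder : derNum r / (r.factorial : ℝ)
        = ∑ j ∈ Finset.range (r + 1), (-1 : ℝ) ^ j / (j.factorial : ℝ) := by
      rw [derNum, mul_comm, mul_div_assoc, div_self hfac, mul_one]
    have hc : ((r : ℝ) / n) * ((n.descFactorial r : ℝ) / (n : ℝ) ^ r) = a r - a (r + 1) := by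
      have hd : (n.descFactorial (r + 1) : ℝ) = ((n : ℝ) - r) * (n.descFactorial r : ℝ) := by
        rw [Nat.descFactorial_succ, Nat.cast_mul, Nat.cast_sub hr.2]
      simp only [ha, hd, pow_succ]
      field_simp
      ring
    have hfil : (Finset.range (n + 1)).filter (fun j => j ≤ r) = Finset.range (r + 1) := by
      ext j
      simp only [Finset.mem_filter, Finset.mem_range]
      omega
    rw [hder, hc, ← Finset.sum_filter, hfil, Finset.mul_sum]
    exact Finset.sum_congr rfl fun j _ => mul_comm _ _
  rw [Finset.sum_congr rfl hterm, Finset.sum_comm]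
  have hend : a (n + 1) = 0 := by
    simp [ha, Nat.descFactorial_eq_zero_iff_lt.mpr (Nat.lt_succ_self n)]
  have hinner : ∀ j ∈ Finset.range (n + 1),
      (∑ r ∈ Finset.Icc 1 n,
        if j ≤ r then ((-1 : ℝ) ^ j / (j.factorial : ℝ)) * (a r - a (r + 1)) else 0)
      = ((-1 : ℝ) ^ j / (j.factorial : ℝ)) * a j := by
    intro j hj
    rw [Finset.mem_range] at hj
    have hfil : (Finset.Icc 1 n).filter (fun r => j ≤ r) = Finset.Ico (max 1 j) (n + 1) := by
      ext r
      simp only [Finset.mem_filter, Finset.mem_Icc, Finset.mem_Ico]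
      omega
    rw [← Finset.sum_filter, hfil, ← Finset.mul_sum,
      tele (max 1 j) (n + 1) (by omega), hend, sub_zero]
    congr 1
    rcases Nat.eq_zero_or_pos j with h0 | h1
    · subst h0
      simp [ha, Nat.descFactorial, div_self hn0]
    · rw [max_eq_right h1]
  rw [Finset.sum_congr rfl hinner]
  -- now ∑ j (-1)^j/j! * a j = ((n-1)/n)^n via binomial theorem
  have hbin : (((n : ℝ) - 1) / n) ^ n = ((-1 / (n : ℝ)) + 1) ^ n := by
    congr 1
    field_simp
    ring
  rw [hbin, add_pow]
  apply Finset.sum_congr rfl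
  intro j hj
  rw [Finset.mem_range] at hj
  have hch : (n.descFactorial j : ℝ) = (j.factorial : ℝ) * (n.choose j : ℝ) := by
    rw [Nat.descFactorial_eq_factorial_mul_choose]; push_cast; ring
  have hfac : (j.factorial : ℝ) ≠ 0 := by positivity
  simp only [ha, hch, one_pow, mul_one, div_pow]
  field_simp
end

section
/- The Poisson rates for the screaming-toes components are λ̃_j := (1/j)·P(Po(j) < j-1), where P(Po(j) < j-1) = e^{-j} ∑_{i=0}^{j-2} j^i/i!, and they satisfy lim_{j→∞} P(Po(j) < j-1) = 1/2, i.e. j·λ̃_j → 1/2 as j → ∞. -/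
open Finset Filter

open Topology

noncomputable def pa (n k : ℕ) : ℝ := (n : ℝ) ^ k / (k.factorial : ℝ)

lemma pa_nonneg (n k : ℕ) : 0 ≤ pa n k := by unfold pa; positivity

lemma pa_summable (n : ℕ) : Summable (pa n) := Real.summable_pow_div_factorial n

lemma pa_tsum (n : ℕ) : ∑' k, pa n k = Real.exp n := by
  rw [Real.exp_eq_exp_ℝ, NormedSpace.exp_eq_tsum_div]
  rfl

lemma pa_ratio (n k : ℕ) : pa n (k + 1) = pa n k * ((n : ℝ) / (k + 1)) := by
  unfold pa
  rw [pow_succ, Nat.factorial_succ]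
  have h1 : (k.factorial : ℝ) ≠ 0 := Nat.cast_ne_zero.2 k.factorial_ne_zero
  have h2 : ((k : ℝ) + 1) ≠ 0 := by positivity
  field_simp
  ring_nf
  push_cast; ring

lemma fact_L1 (n : ℕ) : ∀ j : ℕ, j < n →
    (((n + j).factorial : ℝ)) ≤ (n : ℝ) ^ (2 * j + 1) * ((n - 1 - j).factorial : ℝ) := by
  intro j
  induction j with
  | zero =>
    intro h
    have h1 : n = (n - 1 - 0) + 1 := by omega
    rw [pow_one]
    calc ((n + 0).factorial : ℝ) = (((n - 1 - 0) + 1).factorial : ℝ) := by rw [← h1]; norm_num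
      _ = ((n - 1 - 0 : ℕ) + 1) * ((n - 1 - 0).factorial : ℝ) := by
          rw [Nat.factorial_succ]; push_cast; ring
      _ ≤ (n : ℝ) * ((n - 1 - 0).factorial : ℝ) := by
          have : ((n - 1 - 0 : ℕ) : ℝ) + 1 ≤ (n : ℝ) := by
            have : (n - 1 - 0 : ℕ) + 1 ≤ n := by omega
            exact_mod_cast this
          have hf : (0 : ℝ) ≤ ((n - 1 - 0).factorial : ℝ) := by positivity
          nlinarith
  | succ j ih =>
    intro h
    have ih' := ih (by omega)
    set M : ℕ := n - 1 - (j + 1) with hM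
    have hMn : n = M + j + 2 := by omega
    have e2 : (n - 1 - j) = M + 1 := by omega
    have e1 : (n + (j + 1)).factorial = (n + j + 1) * (n + j).factorial := by
      rw [show n + (j + 1) = (n + j) + 1 from rfl, Nat.factorial_succ]
    have key : ((n : ℝ) + j + 1) * ((M : ℝ) + 1) ≤ (n : ℝ) ^ 2 := by
      have hn : (n : ℝ) = (M : ℝ) + (j : ℝ) + 2 := by exact_mod_cast congrArg (Nat.cast (R := ℝ)) hMn
      nlinarith [sq_nonneg ((j : ℝ) + 1)]
    have hfM : (0 : ℝ) ≤ (M.factorial : ℝ) := by positivity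
    have hpow : (0 : ℝ) ≤ (n : ℝ) ^ (2 * j + 1) := by positivity
    calc ((n + (j + 1)).factorial : ℝ) = ((n : ℝ) + j + 1) * ((n + j).factorial : ℝ) := by
          rw [e1]; push_cast; ring
      _ ≤ ((n : ℝ) + j + 1) * ((n : ℝ) ^ (2 * j + 1) * ((n - 1 - j).factorial : ℝ)) := by
          have hpos : (0 : ℝ) ≤ (n : ℝ) + j + 1 := by positivity
          exact mul_le_mul_of_nonneg_left ih' hpos
      _ = (n : ℝ) ^ (2 * j + 1) * (((n : ℝ) + j + 1) * ((M : ℝ) + 1)) * (M.factorial : ℝ) := by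
          rw [e2, Nat.factorial_succ]; push_cast; ring
      _ ≤ (n : ℝ) ^ (2 * j + 1) * (n : ℝ) ^ 2 * (M.factorial : ℝ) := by
          have := mul_le_mul_of_nonneg_left key hpow
          exact mul_le_mul_of_nonneg_right this hfM
      _ = (n : ℝ) ^ (2 * (j + 1) + 1) * ((n - 1 - (j + 1)).factorial : ℝ) := by
          rw [← pow_add, ← hM]; ring_nf

lemma fact_L2 (n J : ℕ) (hJn : J + 1 ≤ n) : ∀ j : ℕ, j ≤ J →
    (1 - (J : ℝ) ^ 2 / (n : ℝ) ^ 2) ^ j * (n : ℝ) ^ (2 * j + 1) * ((n - 1 - j).factorial : ℝ)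
      ≤ ((n + j).factorial : ℝ) := by
  have hn0 : (0 : ℝ) < (n : ℝ) := by exact_mod_cast show 0 < n by omega
  have hJr : (J : ℝ) + 1 ≤ (n : ℝ) := by exact_mod_cast hJn
  have hrho : (0 : ℝ) ≤ 1 - (J : ℝ) ^ 2 / (n : ℝ) ^ 2 := by
    rw [sub_nonneg, div_le_one (by positivity)]
    nlinarith [show (0:ℝ) ≤ (J:ℝ) from Nat.cast_nonneg J]
  set ρ : ℝ := 1 - (J : ℝ) ^ 2 / (n : ℝ) ^ 2 with hρ
  have hrn : ρ * (n : ℝ) ^ 2 = (n : ℝ) ^ 2 - (J : ℝ) ^ 2 := by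
    rw [hρ, sub_mul, div_mul_cancel₀ _ (by positivity)]; ring
  intro j
  induction j with
  | zero =>
    intro _
    have h1 : n = (n - 1 - 0) + 1 := by omega
    have : ((n + 0).factorial : ℝ) = ((n - 1 - 0 : ℕ) + 1) * ((n - 1 - 0).factorial : ℝ) := by
      rw [show n + 0 = (n - 1 - 0) + 1 by omega, Nat.factorial_succ]; push_cast; ring
    rw [this, pow_zero, one_mul, pow_one]
    have : ((n - 1 - 0 : ℕ) : ℝ) + 1 = (n : ℝ) := by
      rw [show ((n - 1 - 0 : ℕ) : ℝ) + 1 = (((n - 1 - 0) + 1 : ℕ) : ℝ) by push_cast; ring, ← h1]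
    rw [this]
  | succ j ih =>
    intro h
    have ih' := ih (by omega)
    set M : ℕ := n - 1 - (j + 1) with hM
    have hMn : n = M + j + 2 := by omega
    have e2 : (n - 1 - j) = M + 1 := by omega
    have e1 : (n + (j + 1)).factorial = (n + j + 1) * (n + j).factorial := by
      rw [show n + (j + 1) = (n + j) + 1 from rfl, Nat.factorial_succ]
    have key : ρ * (n : ℝ) ^ 2 ≤ ((n : ℝ) + j + 1) * ((M : ℝ) + 1) := by
      have hn : (n : ℝ) = (M : ℝ) + (j : ℝ) + 2 := by exact_mod_cast congrArg (Nat.cast (R := ℝ)) hMn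
      have hjJ : (j : ℝ) + 1 ≤ (J : ℝ) := by exact_mod_cast h
      rw [hrn]
      nlinarith [show (0:ℝ) ≤ (j:ℝ) from Nat.cast_nonneg j, show (0:ℝ) ≤ (J:ℝ) from Nat.cast_nonneg J]
    have hfM : (0 : ℝ) ≤ (M.factorial : ℝ) := by positivity
    have hρj : (0 : ℝ) ≤ ρ ^ j := pow_nonneg hrho j
    calc ρ ^ (j + 1) * (n : ℝ) ^ (2 * (j + 1) + 1) * ((n - 1 - (j + 1)).factorial : ℝ)
        = (ρ * (n : ℝ) ^ 2) * (ρ ^ j * (n : ℝ) ^ (2 * j + 1)) * (M.factorial : ℝ) := by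
          rw [← hM, show 2 * (j + 1) + 1 = (2 * j + 1) + 2 by ring, pow_add, pow_succ]; ring
      _ ≤ (((n : ℝ) + j + 1) * ((M : ℝ) + 1)) * (ρ ^ j * (n : ℝ) ^ (2 * j + 1)) * (M.factorial : ℝ) := by
          have h2 : (0 : ℝ) ≤ ρ ^ j * (n : ℝ) ^ (2 * j + 1) := by positivity
          exact mul_le_mul_of_nonneg_right (mul_le_mul_of_nonneg_right key h2) hfM
      _ = ((n : ℝ) + j + 1) * (ρ ^ j * (n : ℝ) ^ (2 * j + 1) * (((M : ℝ) + 1) * (M.factorial : ℝ))) := by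
          ring
      _ = ((n : ℝ) + j + 1) * (ρ ^ j * (n : ℝ) ^ (2 * j + 1) * ((n - 1 - j).factorial : ℝ)) := by
          rw [e2, Nat.factorial_succ]; push_cast; ring
      _ ≤ ((n : ℝ) + j + 1) * ((n + j).factorial : ℝ) := by
          have hpos : (0 : ℝ) ≤ (n : ℝ) + j + 1 := by positivity
          exact mul_le_mul_of_nonneg_left ih' hpos
      _ = ((n + (j + 1)).factorial : ℝ) := by rw [e1]; push_cast; ring

lemma pa_pair_le (n j : ℕ) (h : j < n) : pa n (n - 1 - j) ≤ pa n (n + j) := by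
  unfold pa
  have hb : (0 : ℝ) < ((n - 1 - j).factorial : ℝ) := by exact_mod_cast (n - 1 - j).factorial_pos
  have hd : (0 : ℝ) < ((n + j).factorial : ℝ) := by exact_mod_cast (n + j).factorial_pos
  rw [div_le_div_iff₀ hb hd]
  have hsplit : (n : ℝ) ^ (n + j) = (n : ℝ) ^ (n - 1 - j) * (n : ℝ) ^ (2 * j + 1) := by
    rw [← pow_add]; congr 1; omega
  rw [hsplit]
  calc (n : ℝ) ^ (n - 1 - j) * ((n + j).factorial : ℝ)
      ≤ (n : ℝ) ^ (n - 1 - j) * ((n : ℝ) ^ (2 * j + 1) * ((n - 1 - j).factorial : ℝ)) :=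
        mul_le_mul_of_nonneg_left (fact_L1 n j h) (by positivity)
    _ = (n : ℝ) ^ (n - 1 - j) * (n : ℝ) ^ (2 * j + 1) * ((n - 1 - j).factorial : ℝ) := by ring

lemma pa_pair_ge (n J j : ℕ) (hJn : J + 1 ≤ n) (hj : j ≤ J) :
    pa n (n + j) ≤ ((1 - (J : ℝ) ^ 2 / (n : ℝ) ^ 2)⁻¹) ^ J * pa n (n - 1 - j) := by
  have hn0 : (0 : ℝ) < (n : ℝ) := by exact_mod_cast show 0 < n by omega
  have hJr : (J : ℝ) + 1 ≤ (n : ℝ) := by exact_mod_cast hJn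
  have hJ0 : (0 : ℝ) ≤ (J : ℝ) := Nat.cast_nonneg J
  have hρpos : (0 : ℝ) < 1 - (J : ℝ) ^ 2 / (n : ℝ) ^ 2 := by
    rw [sub_pos, div_lt_one (by positivity)]; nlinarith
  set ρ : ℝ := 1 - (J : ℝ) ^ 2 / (n : ℝ) ^ 2 with hρ
  have hρle1 : ρ ≤ 1 := by
    rw [hρ]; have : (0:ℝ) ≤ (J : ℝ) ^ 2 / (n : ℝ) ^ 2 := by positivity
    linarith
  have l2 := fact_L2 n J hJn j hj
  have hmono : ρ ^ J ≤ ρ ^ j := pow_le_pow_of_le_one hρpos.le hρle1 hj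
  have l2' : ρ ^ J * ((n : ℝ) ^ (2 * j + 1) * ((n - 1 - j).factorial : ℝ)) ≤ ((n + j).factorial : ℝ) := by
    refine le_trans ?_ l2
    have hx : (0 : ℝ) ≤ (n : ℝ) ^ (2 * j + 1) * ((n - 1 - j).factorial : ℝ) := by positivity
    calc ρ ^ J * ((n : ℝ) ^ (2 * j + 1) * ((n - 1 - j).factorial : ℝ))
        ≤ ρ ^ j * ((n : ℝ) ^ (2 * j + 1) * ((n - 1 - j).factorial : ℝ)) :=
          mul_le_mul_of_nonneg_right hmono hx
      _ = ρ ^ j * (n : ℝ) ^ (2 * j + 1) * ((n - 1 - j).factorial : ℝ) := by ring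
  unfold pa
  have hb : (0 : ℝ) < ((n + j).factorial : ℝ) := by exact_mod_cast (n + j).factorial_pos
  have hd : (0 : ℝ) < ((n - 1 - j).factorial : ℝ) := by exact_mod_cast (n - 1 - j).factorial_pos
  rw [mul_div_assoc', div_le_div_iff₀ hb hd]
  have hsplit : (n : ℝ) ^ (n + j) = (n : ℝ) ^ (n - 1 - j) * (n : ℝ) ^ (2 * j + 1) := by
    rw [← pow_add]; congr 1; omega
  have cancel : (ρ⁻¹) ^ J * ρ ^ J = 1 := by
    rw [← mul_pow, inv_mul_cancel₀ hρpos.ne', one_pow]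
  calc (n : ℝ) ^ (n + j) * ((n - 1 - j).factorial : ℝ)
      = (ρ⁻¹) ^ J * (n : ℝ) ^ (n - 1 - j) * (ρ ^ J * ((n : ℝ) ^ (2 * j + 1) * ((n - 1 - j).factorial : ℝ))) := by
        rw [hsplit]; rw [show (ρ⁻¹) ^ J * (n : ℝ) ^ (n - 1 - j) * (ρ ^ J * ((n : ℝ) ^ (2 * j + 1) * ((n - 1 - j).factorial : ℝ))) = ((ρ⁻¹) ^ J * ρ ^ J) * ((n : ℝ) ^ (n - 1 - j) * (n : ℝ) ^ (2 * j + 1) * ((n - 1 - j).factorial : ℝ)) by ring, cancel]; ring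
    _ ≤ (ρ⁻¹) ^ J * (n : ℝ) ^ (n - 1 - j) * ((n + j).factorial : ℝ) := by
        refine mul_le_mul_of_nonneg_left l2' ?_
        positivity

lemma upper_half (n : ℕ) : Real.exp (-(n : ℝ)) * ∑ k ∈ range n, pa n k ≤ 1 / 2 := by
  have hA_le : ∑ k ∈ range n, pa n k ≤ ∑ j ∈ range n, pa n (n + j) := by
    rw [← Finset.sum_range_reflect (fun k => pa n k) n]
    exact Finset.sum_le_sum fun j hj => pa_pair_le n j (Finset.mem_range.1 hj)
  have h2n : ∑ k ∈ range n, pa n k + ∑ j ∈ range n, pa n (n + j) = ∑ k ∈ range (2 * n), pa n k := by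
    rw [Finset.range_eq_Ico, Finset.range_eq_Ico, ← Finset.sum_Ico_consecutive (fun k => pa n k)
      (Nat.zero_le n) (by omega : n ≤ 2 * n)]
    congr 1
    rw [Finset.sum_Ico_eq_sum_range, Finset.sum_Ico_eq_sum_range]
    simp only [Nat.sub_zero, Nat.zero_add, zero_add, show 2 * n - n = n by omega]
  have hle : ∑ k ∈ range (2 * n), pa n k ≤ Real.exp n := by
    rw [← pa_tsum n]
    exact (pa_summable n).sum_le_tsum _ (fun k _ => pa_nonneg n k)
  have hexp : (0 : ℝ) < Real.exp n := Real.exp_pos n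
  have h2A : 2 * ∑ k ∈ range n, pa n k ≤ Real.exp n := by linarith
  rw [Real.exp_neg]
  rw [inv_mul_le_iff₀ hexp]
  linarith

lemma pa_after_le (n : ℕ) : ∀ m : ℕ, pa n (n + m) ≤ pa n n := by
  intro m
  induction m with
  | zero => simp
  | succ m ih =>
    have h1 : pa n (n + (m + 1)) = pa n (n + m) * ((n : ℝ) / (n + m + 1)) := by
      rw [show n + (m + 1) = (n + m) + 1 from rfl, pa_ratio]
      push_cast; ring_nf
    rw [h1]
    have hq : (n : ℝ) / (n + m + 1) ≤ 1 := by
      rw [div_le_one (by positivity)]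
      push_cast; linarith [Nat.cast_nonneg (α := ℝ) m]
    have := pa_nonneg n (n + m)
    nlinarith
lemma pa_geom (n J : ℕ) : ∀ m : ℕ,
    pa n (n + J + 1 + m) ≤ pa n (n + J + 1) * ((n : ℝ) / (n + J + 2)) ^ m := by
  intro m
  induction m with
  | zero => simp
  | succ m ih =>
    have h1 : pa n (n + J + 1 + (m + 1)) = pa n (n + J + 1 + m) * ((n : ℝ) / (n + J + 1 + m + 1)) := by
      rw [show n + J + 1 + (m + 1) = (n + J + 1 + m) + 1 from rfl, pa_ratio]
      push_cast; ring_nf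
    rw [h1]
    have hq1 : (n : ℝ) / (n + J + 1 + m + 1) ≤ (n : ℝ) / (n + J + 2) := by
      apply div_le_div_of_nonneg_left (Nat.cast_nonneg n) (by positivity)
      push_cast; linarith [Nat.cast_nonneg (α := ℝ) m]
    have hq0 : (0 : ℝ) ≤ (n : ℝ) / (n + J + 1 + m + 1) := by positivity
    have hp0 : (0 : ℝ) ≤ pa n (n + J + 1) * ((n : ℝ) / (n + J + 2)) ^ m := by
      have := pa_nonneg n (n + J + 1); positivity
    calc pa n (n + J + 1 + m) * ((n : ℝ) / (n + J + 1 + m + 1))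
        ≤ (pa n (n + J + 1) * ((n : ℝ) / (n + J + 2)) ^ m) * ((n : ℝ) / (n + J + 2)) := by
          apply mul_le_mul ih hq1 hq0 hp0
      _ = pa n (n + J + 1) * ((n : ℝ) / (n + J + 2)) ^ (m + 1) := by rw [pow_succ]; ring

lemma reflect_partial (n J : ℕ) (h : J + 1 ≤ n) :
    ∑ j ∈ range (J + 1), pa n (n - 1 - j) ≤ ∑ k ∈ range n, pa n k := by
  have hinj : ∀ x ∈ range (J + 1), ∀ y ∈ range (J + 1), n - 1 - x = n - 1 - y → x = y := by
    intro x hx y hy hxy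
    have hx' := Finset.mem_range.1 hx
    have hy' := Finset.mem_range.1 hy
    omega
  rw [← Finset.sum_image hinj]
  apply Finset.sum_le_sum_of_subset_of_nonneg
  · intro k hk
    rw [Finset.mem_image] at hk
    obtain ⟨j, hj, rfl⟩ := hk
    have := Finset.mem_range.1 hj
    exact Finset.mem_range.2 (by omega)
  · intro k _ _
    exact pa_nonneg n k

set_option maxHeartbeats 1600000 in
lemma lower_main (n J : ℕ) (hJ1 : 1 ≤ J) (hJn : 2 * J + 2 ≤ n)
    (hst : (n : ℝ) ^ n / (n.factorial : ℝ) ≤ Real.exp n / Real.sqrt n) :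
    (1 - 4 * Real.sqrt n / J) / (1 + Real.exp (2 * (J : ℝ) ^ 3 / (n : ℝ) ^ 2))
      ≤ Real.exp (-(n : ℝ)) * ∑ k ∈ range n, pa n k := by
  have hJn' : J + 1 ≤ n := by omega
  have hn0 : (0 : ℝ) < (n : ℝ) := by exact_mod_cast show 0 < n by omega
  have hJr : (J : ℝ) + 1 ≤ (n : ℝ) := by exact_mod_cast hJn'
  have hJ0 : (1 : ℝ) ≤ (J : ℝ) := by exact_mod_cast hJ1
  have h2J : 2 * (J : ℝ) + 2 ≤ (n : ℝ) := by exact_mod_cast hJn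
  have hρpos : (0 : ℝ) < 1 - (J : ℝ) ^ 2 / (n : ℝ) ^ 2 := by
    rw [sub_pos, div_lt_one (by positivity)]; nlinarith
  set ρ : ℝ := 1 - (J : ℝ) ^ 2 / (n : ℝ) ^ 2 with hρ
  set A : ℝ := ∑ k ∈ range n, pa n k with hA
  set M : ℝ := ∑ j ∈ range (J + 1), pa n (n + j) with hM
  set E : ℝ := (ρ⁻¹) ^ J with hE
  set t : ℝ := 4 * Real.sqrt n / J with ht
  set c : ℝ := 2 * (J : ℝ) ^ 3 / (n : ℝ) ^ 2 with hc
  have hA0 : 0 ≤ A := Finset.sum_nonneg fun k _ => pa_nonneg n k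
  have hE0 : 0 ≤ E := by positivity
  -- splitting the series
  have h1 : A + M + ∑' m, pa n (n + J + 1 + m) = Real.exp n := by
    have hs := (pa_summable n).sum_add_tsum_nat_add (n + J + 1)
    rw [pa_tsum] at hs
    have hsplit : ∑ k ∈ range (n + J + 1), pa n k = A + M := by
      rw [Finset.range_eq_Ico, ← Finset.sum_Ico_consecutive (fun k => pa n k)
        (Nat.zero_le n) (by omega : n ≤ n + J + 1)]
      congr 1
      · rw [hA, Finset.range_eq_Ico]
      · rw [hM, Finset.sum_Ico_eq_sum_range, show n + J + 1 - n = J + 1 by omega]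
    have hcomm : ∑' (m : ℕ), pa n (m + (n + J + 1)) = ∑' m, pa n (n + J + 1 + m) :=
      tsum_congr fun m => by rw [add_comm]
    rw [hsplit, hcomm] at hs
    linarith
  -- middle bound
  have h2 : M ≤ E * A := by
    have step1 : M ≤ ∑ j ∈ range (J + 1), E * pa n (n - 1 - j) :=
      Finset.sum_le_sum fun j hj =>
        pa_pair_ge n J j hJn' (by have := Finset.mem_range.1 hj; omega)
    have step2 : ∑ j ∈ range (J + 1), E * pa n (n - 1 - j)
        = E * ∑ j ∈ range (J + 1), pa n (n - 1 - j) := by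
      rw [Finset.mul_sum]
    have step3 : E * ∑ j ∈ range (J + 1), pa n (n - 1 - j) ≤ E * A :=
      mul_le_mul_of_nonneg_left (reflect_partial n J hJn') hE0
    linarith
  -- tail bound
  have h3 : ∑' m, pa n (n + J + 1 + m) ≤ t * Real.exp n := by
    set q : ℝ := (n : ℝ) / (n + J + 2) with hq
    have hq0 : 0 ≤ q := by positivity
    have hq1 : q < 1 := by
      rw [hq, div_lt_one (by positivity)]
      linarith [Nat.cast_nonneg (α := ℝ) J]
    have hsum1 : Summable fun m => pa n (n + J + 1 + m) := by
      apply Summable.congr ((summable_nat_add_iff (n + J + 1)).2 (pa_summable n))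
      intro m; rw [add_comm]
    have hsum2 : Summable fun m : ℕ => pa n (n + J + 1) * q ^ m :=
      (summable_geometric_of_lt_one hq0 hq1).mul_left _
    have hts : ∑' m, pa n (n + J + 1 + m) ≤ ∑' m : ℕ, pa n (n + J + 1) * q ^ m :=
      hsum1.tsum_le_tsum (pa_geom n J) hsum2
    have hgeo : ∑' m : ℕ, pa n (n + J + 1) * q ^ m = pa n (n + J + 1) * (1 - q)⁻¹ := by
      rw [tsum_mul_left, tsum_geometric_of_lt_one hq0 hq1]
    have hinv : (1 - q)⁻¹ = ((n : ℝ) + J + 2) / ((J : ℝ) + 2) := by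
      have h1q : 1 - q = ((J : ℝ) + 2) / ((n : ℝ) + J + 2) := by
        rw [hq]; field_simp; ring
      rw [h1q, inv_div]
    have hpa : pa n (n + J + 1) ≤ Real.exp n / Real.sqrt n := by
      have h0 : pa n (n + (J + 1)) ≤ pa n n := pa_after_le n (J + 1)
      rw [show n + J + 1 = n + (J + 1) by omega]
      refine h0.trans ?_
      unfold pa
      exact hst
    have hsqrt : Real.sqrt n * Real.sqrt n = (n : ℝ) := Real.mul_self_sqrt hn0.le
    have hsq0 : 0 < Real.sqrt n := Real.sqrt_pos.2 hn0
    have hJpos : (0 : ℝ) < (J : ℝ) := by linarith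
    have hfrac : ((n : ℝ) + J + 2) / ((J : ℝ) + 2) ≤ 2 * Real.sqrt n * Real.sqrt n / J := by
      rw [mul_assoc, hsqrt, div_le_div_iff₀ (by positivity) (by positivity)]
      nlinarith
    have hexp : (0 : ℝ) < Real.exp n := Real.exp_pos n
    have heq : (Real.exp n / Real.sqrt n) * (2 * Real.sqrt n * Real.sqrt n / J)
        = 2 * Real.sqrt n / J * Real.exp n := by
      field_simp
    have hfinal : (Real.exp n / Real.sqrt n) * (2 * Real.sqrt n * Real.sqrt n / J) ≤ t * Real.exp n := by
      rw [heq, ht]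
      have h24 : 2 * Real.sqrt n / (J : ℝ) ≤ 4 * Real.sqrt n / J :=
        (div_le_div_iff_of_pos_right hJpos).2 (by nlinarith)
      exact mul_le_mul_of_nonneg_right h24 hexp.le
    calc ∑' m, pa n (n + J + 1 + m) ≤ pa n (n + J + 1) * (1 - q)⁻¹ := by rw [← hgeo]; exact hts
      _ = pa n (n + J + 1) * (((n : ℝ) + J + 2) / ((J : ℝ) + 2)) := by rw [hinv]
      _ ≤ (Real.exp n / Real.sqrt n) * (2 * Real.sqrt n * Real.sqrt n / J) := by
          apply mul_le_mul hpa hfrac (by positivity) (by positivity)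
      _ ≤ t * Real.exp n := hfinal
  -- E ≤ exp c
  have h4 : E ≤ Real.exp c := by
    set x : ℝ := (J : ℝ) ^ 2 / (n : ℝ) ^ 2 with hx
    have hx0 : 0 ≤ x := by positivity
    have hx2 : x ≤ 1 / 2 := by
      rw [hx, div_le_iff₀ (by positivity)]
      nlinarith
    have hinv2 : ρ⁻¹ ≤ 1 + 2 * x := by
      rw [← one_div, div_le_iff₀ hρpos, hρ]
      nlinarith
    have hexp2 : 1 + 2 * x ≤ Real.exp (2 * x) := by
      have := Real.add_one_le_exp (2 * x)
      linarith
    calc E ≤ (1 + 2 * x) ^ J := pow_le_pow_left₀ (by positivity) hinv2 J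
      _ ≤ Real.exp (2 * x) ^ J := pow_le_pow_left₀ (by positivity) hexp2 J
      _ = Real.exp ((J : ℕ) * (2 * x)) := (Real.exp_nat_mul (2 * x) J).symm
      _ = Real.exp c := by
          congr 1
          rw [hx, hc]
          field_simp
  -- assemble
  have hexp : (0 : ℝ) < Real.exp n := Real.exp_pos n
  have key : (1 - t) * Real.exp n ≤ A * (1 + E) := by nlinarith [h1, h2, h3]
  have key2 : (1 - t) * Real.exp n ≤ A * (1 + Real.exp c) := by nlinarith
  rw [div_le_iff₀ (by positivity : (0 : ℝ) < 1 + Real.exp c)]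
  have := (le_div_iff₀ hexp).2 key2
  calc (1 : ℝ) - t ≤ A * (1 + Real.exp c) / Real.exp n := this
    _ = Real.exp (-(n : ℝ)) * A * (1 + Real.exp c) := by
        rw [Real.exp_neg, div_eq_mul_inv]; ring

lemma stirling_ev : ∀ᶠ n : ℕ in atTop,
    (n : ℝ) ^ n / (n.factorial : ℝ) ≤ Real.exp n / Real.sqrt n := by
  have hpi : (1 : ℝ) < Real.sqrt Real.pi := by
    rw [show (1 : ℝ) = Real.sqrt 1 by simp]
    exact Real.sqrt_lt_sqrt (by norm_num) (by linarith [Real.pi_gt_three])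
  have h1 : ∀ᶠ n : ℕ in atTop, 1 ≤ Stirling.stirlingSeq n :=
    Stirling.tendsto_stirlingSeq_sqrt_pi.eventually_const_le hpi
  filter_upwards [h1, eventually_ge_atTop 1] with n hs hn
  have hn0 : (0 : ℝ) < (n : ℝ) := by exact_mod_cast hn
  have hsq2 : (0 : ℝ) < Real.sqrt (2 * n) := Real.sqrt_pos.2 (by positivity)
  have hpow : (0 : ℝ) < ((n : ℝ) / Real.exp 1) ^ n := by positivity
  have hdenom : (0 : ℝ) < Real.sqrt (2 * n) * ((n : ℝ) / Real.exp 1) ^ n := by positivity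
  have hfac : Real.sqrt (2 * n) * ((n : ℝ) / Real.exp 1) ^ n ≤ (n.factorial : ℝ) := by
    have := (one_le_div hdenom).1 hs
    exact this
  have hpow_eq : ((n : ℝ) / Real.exp 1) ^ n = (n : ℝ) ^ n / Real.exp n := by
    rw [div_pow, Real.exp_one_pow]
  have hfacpos : (0 : ℝ) < (n.factorial : ℝ) := by exact_mod_cast n.factorial_pos
  have step1 : (n : ℝ) ^ n / (n.factorial : ℝ)
      ≤ (n : ℝ) ^ n / (Real.sqrt (2 * n) * ((n : ℝ) ^ n / Real.exp n)) := by
    apply div_le_div_of_nonneg_left (by positivity) (by positivity)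
    rw [← hpow_eq]
    exact hfac
  have step2 : (n : ℝ) ^ n / (Real.sqrt (2 * n) * ((n : ℝ) ^ n / Real.exp n))
      = Real.exp n / Real.sqrt (2 * n) := by
    have hnn : (0 : ℝ) < (n : ℝ) ^ n := by positivity
    field_simp
  have step3 : Real.exp n / Real.sqrt (2 * n) ≤ Real.exp n / Real.sqrt n := by
    apply div_le_div_of_nonneg_left (Real.exp_pos _).le (Real.sqrt_pos.2 hn0)
    exact Real.sqrt_le_sqrt (by linarith)
  calc (n : ℝ) ^ n / (n.factorial : ℝ)
      ≤ (n : ℝ) ^ n / (Real.sqrt (2 * n) * ((n : ℝ) ^ n / Real.exp n)) := step1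
    _ = Real.exp n / Real.sqrt (2 * n) := step2
    _ ≤ Real.exp n / Real.sqrt n := step3

noncomputable def Jf (n : ℕ) : ℕ := ⌊(n : ℝ) ^ ((3 : ℝ) / 5)⌋₊

lemma Jf_le (n : ℕ) : (Jf n : ℝ) ≤ (n : ℝ) ^ ((3 : ℝ) / 5) :=
  Nat.floor_le (Real.rpow_nonneg (Nat.cast_nonneg n) _)

lemma Jf_gt (n : ℕ) : (n : ℝ) ^ ((3 : ℝ) / 5) - 1 < (Jf n : ℝ) := by
  have := Nat.lt_floor_add_one ((n : ℝ) ^ ((3 : ℝ) / 5))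
  have h : ((Jf n : ℕ) : ℝ) + 1 > (n : ℝ) ^ ((3 : ℝ) / 5) := by exact_mod_cast this
  linarith

lemma ev_J1 : ∀ᶠ n : ℕ in atTop, 1 ≤ Jf n := by
  filter_upwards [eventually_ge_atTop 1] with n hn
  rw [Jf]
  apply Nat.le_floor
  rw [Nat.cast_one]
  have h1 : (1 : ℝ) ≤ (n : ℝ) := by exact_mod_cast hn
  calc (1 : ℝ) = (1 : ℝ) ^ ((3 : ℝ) / 5) := (Real.one_rpow _).symm
    _ ≤ (n : ℝ) ^ ((3 : ℝ) / 5) := Real.rpow_le_rpow (by norm_num) h1 (by norm_num)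

lemma ev_rpow_small : ∀ᶠ n : ℕ in atTop, (n : ℝ) ^ ((3 : ℝ) / 5) ≤ (n : ℝ) / 4 := by
  have ht : Tendsto (fun n : ℕ => ((n : ℝ)) ^ (-((2 : ℝ) / 5))) atTop (𝓝 0) :=
    (tendsto_rpow_neg_atTop (by norm_num : (0 : ℝ) < 2 / 5)).comp tendsto_natCast_atTop_atTop
  have hev := ht.eventually_le_const (show (0 : ℝ) < 1 / 4 by norm_num)
  filter_upwards [hev, eventually_ge_atTop 1] with n h h1
  have hn0 : (0 : ℝ) < (n : ℝ) := by exact_mod_cast h1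
  have he : (n : ℝ) ^ ((3 : ℝ) / 5) = (n : ℝ) ^ (-((2 : ℝ) / 5)) * (n : ℝ) := by
    rw [show (3 : ℝ) / 5 = -((2 : ℝ) / 5) + 1 by norm_num, Real.rpow_add hn0, Real.rpow_one]
  rw [he]
  calc (n : ℝ) ^ (-((2 : ℝ) / 5)) * (n : ℝ) ≤ (1 / 4) * (n : ℝ) :=
        mul_le_mul_of_nonneg_right h hn0.le
    _ = (n : ℝ) / 4 := by ring

lemma ev_J2 : ∀ᶠ n : ℕ in atTop, 2 * Jf n + 2 ≤ n := by
  filter_upwards [ev_rpow_small, eventually_ge_atTop 4] with n h h4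
  have hle := (Jf_le n).trans h
  have h4' : ((4 * Jf n : ℕ) : ℝ) ≤ (n : ℝ) := by push_cast; linarith
  have : 4 * Jf n ≤ n := by exact_mod_cast h4'
  omega

lemma lim_T1 : Tendsto (fun n : ℕ => 4 * Real.sqrt n / (Jf n : ℝ)) atTop (𝓝 0) := by
  have hub : Tendsto (fun n : ℕ => 8 * ((n : ℝ)) ^ (-((1 : ℝ) / 10))) atTop (𝓝 0) := by
    have h := (tendsto_rpow_neg_atTop (by norm_num : (0 : ℝ) < 1 / 10)).comp
      (tendsto_natCast_atTop_atTop (R := ℝ))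
    have := h.const_mul (8 : ℝ)
    simpa using this
  have hbig : ∀ᶠ n : ℕ in atTop, (2 : ℝ) ≤ (n : ℝ) ^ ((3 : ℝ) / 5) := by
    have := (tendsto_rpow_atTop (by norm_num : (0 : ℝ) < 3 / 5)).comp
      (tendsto_natCast_atTop_atTop (R := ℝ))
    exact this.eventually_ge_atTop 2
  apply tendsto_of_tendsto_of_tendsto_of_le_of_le' tendsto_const_nhds hub
  · filter_upwards with n
    positivity
  · filter_upwards [hbig, eventually_ge_atTop 1] with n h2 h1
    have hn0 : (0 : ℝ) < (n : ℝ) := by exact_mod_cast h1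
    have hJhalf : (n : ℝ) ^ ((3 : ℝ) / 5) / 2 ≤ (Jf n : ℝ) := by
      have := Jf_gt n
      linarith
    have hhalfpos : (0 : ℝ) < (n : ℝ) ^ ((3 : ℝ) / 5) / 2 := by
      have : (0 : ℝ) < (n : ℝ) ^ ((3 : ℝ) / 5) := Real.rpow_pos_of_pos hn0 _
      linarith
    calc 4 * Real.sqrt n / (Jf n : ℝ)
        ≤ 4 * Real.sqrt n / ((n : ℝ) ^ ((3 : ℝ) / 5) / 2) :=
          div_le_div_of_nonneg_left (by positivity) hhalfpos hJhalf
      _ = 8 * ((n : ℝ) ^ ((1 : ℝ) / 2) / (n : ℝ) ^ ((3 : ℝ) / 5)) := by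
          rw [Real.sqrt_eq_rpow]; field_simp; ring
      _ = 8 * ((n : ℝ)) ^ (-((1 : ℝ) / 10)) := by
          rw [← Real.rpow_sub hn0]
          norm_num
  done

lemma lim_T2 : Tendsto (fun n : ℕ => 2 * ((Jf n : ℝ)) ^ 3 / ((n : ℝ)) ^ 2) atTop (𝓝 0) := by
  have hub : Tendsto (fun n : ℕ => 2 * ((n : ℝ)) ^ (-((1 : ℝ) / 5))) atTop (𝓝 0) := by
    have h := (tendsto_rpow_neg_atTop (by norm_num : (0 : ℝ) < 1 / 5)).comp
      (tendsto_natCast_atTop_atTop (R := ℝ))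
    have := h.const_mul (2 : ℝ)
    simpa using this
  apply tendsto_of_tendsto_of_tendsto_of_le_of_le' tendsto_const_nhds hub
  · filter_upwards with n
    positivity
  · filter_upwards [eventually_ge_atTop 1] with n h1
    have hn0 : (0 : ℝ) < (n : ℝ) := by exact_mod_cast h1
    have hcube : ((Jf n : ℝ)) ^ 3 ≤ (n : ℝ) ^ ((9 : ℝ) / 5) := by
      calc ((Jf n : ℝ)) ^ 3 ≤ ((n : ℝ) ^ ((3 : ℝ) / 5)) ^ 3 :=
            pow_le_pow_left₀ (Nat.cast_nonneg _) (Jf_le n) 3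
        _ = (n : ℝ) ^ ((9 : ℝ) / 5) := by
            rw [← Real.rpow_natCast ((n : ℝ) ^ ((3 : ℝ) / 5)) 3, ← Real.rpow_mul hn0.le]
            norm_num
    have hsq : ((n : ℝ)) ^ 2 = (n : ℝ) ^ ((2 : ℝ)) := by
      rw [← Real.rpow_natCast (n : ℝ) 2]; norm_num
    calc 2 * ((Jf n : ℝ)) ^ 3 / ((n : ℝ)) ^ 2
        ≤ 2 * (n : ℝ) ^ ((9 : ℝ) / 5) / ((n : ℝ)) ^ 2 := by
          apply div_le_div_of_nonneg_right ?_ (by positivity)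
          linarith
      _ = 2 * ((n : ℝ)) ^ (-((1 : ℝ) / 5)) := by
          rw [hsq, mul_div_assoc, ← Real.rpow_sub hn0]
          norm_num

lemma lim_T3 : Tendsto (fun n : ℕ => 1 / Real.sqrt n) atTop (𝓝 0) := by
  have h := (tendsto_rpow_neg_atTop (by norm_num : (0 : ℝ) < 1 / 2)).comp
    (tendsto_natCast_atTop_atTop (R := ℝ))
  apply Tendsto.congr ?_ h
  intro n
  simp only [Function.comp]
  rw [Real.rpow_neg (Nat.cast_nonneg n), ← Real.sqrt_eq_rpow, one_div]

theorem stmt_16 :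
    Tendsto (fun j : ℕ =>
        Real.exp (-(j : ℝ)) * ∑ i ∈ Finset.range (j - 1), (j : ℝ) ^ i / (i.factorial : ℝ))
      atTop (nhds (1 / 2)) := by
  show Tendsto (fun n : ℕ => Real.exp (-(n : ℝ)) * ∑ i ∈ Finset.range (n - 1), pa n i)
    atTop (𝓝 (1 / 2))
  have hlow : Tendsto (fun n : ℕ =>
      (1 - 4 * Real.sqrt n / (Jf n : ℝ)) / (1 + Real.exp (2 * ((Jf n : ℝ)) ^ 3 / ((n : ℝ)) ^ 2))
        - 1 / Real.sqrt n) atTop (𝓝 (1 / 2)) := by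
    have hd : Tendsto (fun n : ℕ =>
        (1 - 4 * Real.sqrt n / (Jf n : ℝ)) / (1 + Real.exp (2 * ((Jf n : ℝ)) ^ 3 / ((n : ℝ)) ^ 2)))
        atTop (𝓝 ((1 - 0) / (1 + Real.exp 0))) := by
      apply Tendsto.div (tendsto_const_nhds.sub lim_T1)
        (tendsto_const_nhds.add ((Real.continuous_exp.tendsto 0).comp lim_T2))
      rw [Real.exp_zero]; norm_num
    have := hd.sub lim_T3
    rw [show (1 - 0) / (1 + Real.exp 0) - 0 = 1 / 2 by rw [Real.exp_zero]; norm_num] at this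
    exact this
  apply tendsto_of_tendsto_of_tendsto_of_le_of_le' hlow tendsto_const_nhds
  · -- lower bound eventually
    filter_upwards [stirling_ev, ev_J1, ev_J2, eventually_ge_atTop 1] with n hst hJ1 hJ2 hn1
    have hmain := lower_main n (Jf n) hJ1 hJ2 hst
    have hsum : ∑ k ∈ range n, pa n k = ∑ i ∈ range (n - 1), pa n i + pa n (n - 1) := by
      rw [← Finset.sum_range_succ (pa n) (n - 1), show (n - 1) + 1 = n by omega]
    have hpan : pa n (n - 1) = pa n n := by
      unfold pa
      rw [show ((n - 1).factorial : ℝ) = (n.factorial : ℝ) / n by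
          rw [← Nat.mul_factorial_pred (show n ≠ 0 by omega)]
          push_cast
          field_simp,
        show (n : ℝ) ^ n = (n : ℝ) ^ (n - 1) * n by
          rw [← pow_succ, show (n - 1) + 1 = n by omega]]
      have hn0 : (0 : ℝ) < (n : ℝ) := by exact_mod_cast show 0 < n by omega
      have hf0 : (0 : ℝ) < (n.factorial : ℝ) := by exact_mod_cast n.factorial_pos
      field_simp
    have he3 : Real.exp (-(n : ℝ)) * pa n (n - 1) ≤ 1 / Real.sqrt n := by
      rw [hpan]
      have h1 : pa n n ≤ Real.exp n / Real.sqrt n := hst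
      have h2 : Real.exp (-(n : ℝ)) * pa n n ≤ Real.exp (-(n : ℝ)) * (Real.exp n / Real.sqrt n) :=
        mul_le_mul_of_nonneg_left h1 (Real.exp_pos _).le
      have h3 : Real.exp (-(n : ℝ)) * (Real.exp n / Real.sqrt n) = 1 / Real.sqrt n := by
        rw [Real.exp_neg]
        have := (Real.exp_pos (n : ℝ)).ne'
        field_simp
      linarith
    have hexp0 : (0 : ℝ) < Real.exp (-(n : ℝ)) := Real.exp_pos _
    have hexpand : Real.exp (-(n : ℝ)) * ∑ k ∈ range n, pa n k
        = Real.exp (-(n : ℝ)) * ∑ i ∈ range (n - 1), pa n i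
          + Real.exp (-(n : ℝ)) * pa n (n - 1) := by
      rw [hsum]; ring
    linarith
  · -- upper bound
    filter_upwards with n
    have hsub : ∑ i ∈ range (n - 1), pa n i ≤ ∑ k ∈ range n, pa n k := by
      apply Finset.sum_le_sum_of_subset_of_nonneg
      · exact Finset.range_subset_range.2 (by omega)
      · intro k _ _; exact pa_nonneg n k
    have := upper_half n
    have hexp0 : (0 : ℝ) < Real.exp (-(n : ℝ)) := Real.exp_pos _
    nlinarith
end

section
/- For all integers j ≥ 2, ω_j := P(Po(j) < j-1) = e^{-j} ∑_{i=0}^{j-2} j^i/i! satisfies 0 < ω_j ≤ 1/2; consequently the rejection sampler with θ = 1/2 has acceptance probabilities (ω_j/θ)^{a_j} ∈ (0,1]. -/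
/-!
Write `a i = j^i / i!` and `m = j - 2`. Reflecting the index about `m + 1/2` sends `a i` with
`i ≤ m` to `a (2m + 1 - i)`, and the ratio `a (m + 1 + k) / a (m - k) = j^(2k+1) / ∏_{|l| ≤ k} (m + 1 + l)`
is at least one since `(m + 1 - l)(m + 1 + l) ≤ (m + 1)² ≤ j²`. Hence the lower half
`∑_{i ≤ m} a i` is at most the next `m + 1` terms, so twice it is at most `∑_{i < 2m+2} a i ≤ e^j`.
-/

open Finset

theorem pow_succ_div_factorial_succ (x : ℝ) (n : ℕ) :
    x ^ (n + 1) / (n + 1).factorial = x ^ n / n.factorial * (x / (n + 1)) := by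
  rw [Nat.factorial_succ, pow_succ]
  push_cast
  field_simp

theorem pow_div_factorial_le_mirror {x : ℝ} {m : ℕ} (hx : (m : ℝ) + 1 ≤ x) :
    ∀ {i k : ℕ}, i + k = m →
      x ^ i / i.factorial ≤ x ^ (m + 1 + k) / (m + 1 + k).factorial := by
  have hx₀ : 0 < x := by linarith
  intro i k hik
  induction k generalizing i with
  | zero =>
    subst hik
    rw [add_zero, pow_succ_div_factorial_succ]
    refine le_mul_of_one_le_right (by positivity) ?_
    rw [one_le_div (by positivity)]
    exact_mod_cast hx
  | succ k ih =>
    have hprev := ih (i := i + 1) (by omega)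
    rw [pow_succ_div_factorial_succ] at hprev
    rw [show m + 1 + (k + 1) = m + 1 + k + 1 by ring, pow_succ_div_factorial_succ]
    have hm : (i : ℝ) + 1 + k = m := by exact_mod_cast (by omega : i + 1 + k = m)
    have hratio : (i + 1 : ℝ) / x ≤ x / (↑(m + 1 + k) + 1) := by
      rw [div_le_div_iff₀ hx₀ (by positivity)]
      push_cast
      -- `(m - k)(m + k + 2) = (m + 1)² - (k + 1)² ≤ x²`
      nlinarith
    calc x ^ i / i.factorial
        = x ^ i / i.factorial * (x / (i + 1)) * ((i + 1) / x) := by field_simp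
      _ ≤ x ^ (m + 1 + k) / (m + 1 + k).factorial * ((i + 1) / x) := by gcongr
      _ ≤ x ^ (m + 1 + k) / (m + 1 + k).factorial * (x / (↑(m + 1 + k) + 1)) := by gcongr

theorem two_mul_sum_range_pow_div_factorial_le_exp {x : ℝ} {m : ℕ} (hx : (m : ℝ) + 1 ≤ x) :
    2 * ∑ i ∈ range (m + 1), x ^ i / i.factorial ≤ Real.exp x := by
  set a : ℕ → ℝ := fun i ↦ x ^ i / i.factorial
  have hmirror : ∑ i ∈ range (m + 1), a i ≤ ∑ k ∈ range (m + 1), a (m + 1 + k) := by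
    rw [← sum_range_reflect]
    refine sum_le_sum fun k hk ↦ ?_
    have := mem_range.mp hk
    exact pow_div_factorial_le_mirror hx (by omega)
  calc 2 * ∑ i ∈ range (m + 1), a i
      ≤ ∑ i ∈ range (m + 1), a i + ∑ k ∈ range (m + 1), a (m + 1 + k) := by linarith
    _ = ∑ i ∈ range (m + 1 + (m + 1)), a i := (sum_range_add a _ _).symm
    _ ≤ Real.exp x := Real.sum_le_exp_of_nonneg (by linarith) _

theorem stmt_17 (j : ℕ) (hj : 2 ≤ j) :
    0 < Real.exp (-(j : ℝ)) * ∑ i ∈ Finset.range (j - 1), (j : ℝ) ^ i / (i.factorial : ℝ) ∧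
    Real.exp (-(j : ℝ)) * ∑ i ∈ Finset.range (j - 1), (j : ℝ) ^ i / (i.factorial : ℝ) ≤ 1 / 2 := by
  obtain ⟨m, rfl⟩ : ∃ m, j = m + 2 := ⟨j - 2, by omega⟩
  rw [show m + 2 - 1 = m + 1 by omega, Real.exp_neg]
  refine ⟨by positivity, ?_⟩
  have h := two_mul_sum_range_pow_div_factorial_le_exp (x := ((m + 2 : ℕ) : ℝ)) (m := m)
    (by push_cast; linarith)
  rw [inv_mul_le_iff₀ (Real.exp_pos _)]
  linarith
end
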